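/- arXiv:0906.2725 — 4 statements merged into one kernel-verified Lean document; each statement's English description precedes it below -/
import Mathlib

section
/- Let G be a simple graph on Fin n and let ψ_G be its graph state. Then for every vertex i : Fin n, the stabilizer generator K_i := X_i ∘ (∏_{j ∈ N_G(i)} Z_j) satisfies K_i ψ_G = ψ_G, where N_G(i) is the set of neighbours of i in G. -/
open scoped BigOperators

noncomputable section

/-- The `n`-qubit state space. -/
abbrev V (n : ℕ) : Type := (Fin n → Bool) → ℂ

/-- The numeric value (0 or 1) of a bit. -/
def bval (b : Bool) : ℕ := if b then 1 else 0

/-- A diagonal (multiplication) operator on `V n`. -/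
def diagOp {n : ℕ} (g : (Fin n → Bool) → ℂ) : V n →ₗ[ℂ] V n where
  toFun f := fun v => g v * f v
  map_add' f h := by funext v; simp [mul_add]
  map_smul' c f := by funext v; simp; ring

@[simp] lemma diagOp_apply {n : ℕ} (g : (Fin n → Bool) → ℂ) (f : V n) (v : Fin n → Bool) :
    diagOp g f v = g v * f v := rfl

lemma diagOp_commute {n : ℕ} (g h : (Fin n → Bool) → ℂ) :
    Commute (diagOp g) (diagOp h) := by
  apply LinearMap.ext; intro f; funext v
  simp [Module.End.mul_apply]; ring

/-- The Pauli `Z` operator on qubit `i`. -/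
def Zop {n : ℕ} (i : Fin n) : V n →ₗ[ℂ] V n :=
  diagOp (fun v => (-1 : ℂ) ^ bval (v i))

/-- The Pauli `X` operator on qubit `i`. -/
def Xop {n : ℕ} (i : Fin n) : V n →ₗ[ℂ] V n where
  toFun f := fun v => f (Function.update v i (!(v i)))
  map_add' f h := by funext v; simp
  map_smul' c f := by funext v; simp

/-- The controlled-phase operator on qubits `i`, `j`. -/
def CZop {n : ℕ} (i j : Fin n) : V n →ₗ[ℂ] V n :=
  diagOp (fun v => (-1 : ℂ) ^ (bval (v i) * bval (v j)))

/-- The controlled-phase operator associated to an (unordered) edge. -/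
def CZe {n : ℕ} : Sym2 (Fin n) → (V n →ₗ[ℂ] V n) :=
  Sym2.lift ⟨fun i j => CZop i j, by
    intro i j
    apply LinearMap.ext; intro f; funext v
    simp [CZop, Nat.mul_comm (bval (v i))]⟩

lemma CZe_commute {n : ℕ} (e e' : Sym2 (Fin n)) : Commute (CZe e) (CZe e') := by
  induction e using Sym2.ind with
  | _ i j =>
    induction e' using Sym2.ind with
    | _ k l => simpa [CZe, CZop] using diagOp_commute _ _

/-- The `n`-qubit plus state `|+⟩^{⊗ n}`, the constant function `2^{-n/2}`. -/
def ePlus (n : ℕ) : V n := fun _ => (((2 : ℝ) ^ (-(n : ℝ) / 2) : ℝ) : ℂ)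

/-- The graph state of a simple graph `G` on `Fin n`: the product of the
controlled-phase gates over all edges of `G`, applied to the plus state. -/
def graphState {n : ℕ} (G : SimpleGraph (Fin n)) [DecidableRel G.Adj] : V n :=
  (G.edgeFinset.noncommProd CZe (fun e _ e' _ _ => CZe_commute e e')) (ePlus n)

/-- `true ∧ true` test for both endpoints of an edge, as a Boolean predicate on `Sym2`. -/
def edgeAllTrue {n : ℕ} (v : Fin n → Bool) : Sym2 (Fin n) → Bool :=
  Sym2.lift ⟨fun i j => v i && v j, by intro i j; exact Bool.and_comm _ _⟩

/-- `m_G(v)`: the number of edges of `G` both of whose endpoints `i` satisfy `v i = true`. -/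
def mG {n : ℕ} (G : SimpleGraph (Fin n)) [DecidableRel G.Adj] (v : Fin n → Bool) : ℕ :=
  (G.edgeFinset.filter (fun e => edgeAllTrue v e = true)).card

lemma Zop_commute {n : ℕ} (j k : Fin n) : Commute (Zop j) (Zop k) :=
  diagOp_commute _ _

lemma neg_one_pow_congr' (a b : ℕ) (h : a % 2 = b % 2) : ((-1:ℂ))^a = (-1)^b := by
  conv_lhs => rw [← Nat.div_add_mod a 2]
  conv_rhs => rw [← Nat.div_add_mod b 2]
  simp [pow_add, pow_mul, h]

@[simp] lemma Zop_apply {n : ℕ} (i : Fin n) (f : V n) (v : Fin n → Bool) :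
    Zop i f v = (-1:ℂ)^(bval (v i)) * f v := rfl

lemma Zprod_apply {n : ℕ} (s : Finset (Fin n)) (f : V n) (v : Fin n → Bool) :
    (s.noncommProd Zop (fun j _ k _ _ => Zop_commute j k)) f v
      = (-1:ℂ)^(∑ j ∈ s, bval (v j)) * f v := by
  induction s using Finset.induction with
  | empty => erw [Finset.noncommProd_empty]; simp [Module.End.one_apply]
  | insert _ _ h ih =>
    erw [Finset.noncommProd_insert_of_notMem _ _ _ _ h]
    rw [Finset.sum_insert h]
    simp only [Module.End.mul_apply, Zop_apply, ih, pow_add]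
    ring

lemma CZe_apply {n : ℕ} (e : Sym2 (Fin n)) (f : V n) (v : Fin n → Bool) :
    CZe e f v = (-1:ℂ)^(if edgeAllTrue v e then 1 else 0) * f v := by
  induction e using Sym2.ind with
  | _ j k =>
    simp only [CZe, CZop, Sym2.lift_mk, diagOp_apply, edgeAllTrue]
    have hb : bval (v j) * bval (v k) = (if (v j && v k) = true then 1 else 0) := by
      cases v j <;> cases v k <;> rfl
    rw [hb]
    rfl

lemma CZprod_apply {n : ℕ} (s : Finset (Sym2 (Fin n))) (f : V n) (v : Fin n → Bool) :
    (s.noncommProd CZe (fun e _ e' _ _ => CZe_commute e e')) f v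
      = (-1:ℂ)^((s.filter (fun e => edgeAllTrue v e = true)).card) * f v := by
  induction s using Finset.induction with
  | empty => erw [Finset.noncommProd_empty]; simp [Module.End.one_apply]
  | @insert a s h ih =>
    erw [Finset.noncommProd_insert_of_notMem _ _ _ _ h]
    rw [Finset.filter_insert]
    by_cases hp : edgeAllTrue v a = true
    · rw [if_pos hp, Finset.card_insert_of_notMem (fun hmem => h (Finset.mem_of_mem_filter _ hmem))]
      simp only [Module.End.mul_apply, CZe_apply, ih, hp, if_pos, pow_succ, pow_add]
      ring
    · rw [if_neg hp]
      simp only [Module.End.mul_apply, CZe_apply, ih, hp, if_neg]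
      simp

lemma graphState_apply {n : ℕ} (G : SimpleGraph (Fin n)) [DecidableRel G.Adj]
    (v : Fin n → Bool) :
    graphState G v = (-1:ℂ)^(mG G v) * ePlus n v := by
  simp [graphState, CZprod_apply, mG]

lemma edgeAllTrue_update_of_not_mem {n : ℕ} (v : Fin n → Bool) (i : Fin n) (b : Bool)
    (e : Sym2 (Fin n)) (h : i ∉ e) :
    edgeAllTrue (Function.update v i b) e = edgeAllTrue v e := by
  induction e using Sym2.ind with
  | _ j k =>
    rw [Sym2.mem_iff] at h
    push_neg at h
    simp [edgeAllTrue, Function.update_of_ne (Ne.symm h.1), Function.update_of_ne (Ne.symm h.2)]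

lemma incident_filter_eq {n : ℕ} (G : SimpleGraph (Fin n)) [DecidableRel G.Adj] (i : Fin n) :
    G.edgeFinset.filter (fun e => i ∈ e)
      = (G.neighborFinset i).image (fun j => s(i, j)) := by
  ext e
  induction e using Sym2.ind with
  | _ a b =>
    simp only [Finset.mem_filter, SimpleGraph.mem_edgeFinset, SimpleGraph.mem_edgeSet,
      Finset.mem_image, SimpleGraph.mem_neighborFinset, Sym2.mem_iff]
    constructor
    · rintro ⟨hadj, hi | hi⟩
      · subst hi; exact ⟨b, hadj, rfl⟩
      · subst hi; exact ⟨a, hadj.symm, Sym2.eq_swap⟩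
    · rintro ⟨j, hadj, hj⟩
      rw [Sym2.eq_iff] at hj
      rcases hj with ⟨hi, hjb⟩ | ⟨hij, hb⟩
      · subst hi; subst hjb; exact ⟨hadj, Or.inl rfl⟩
      · subst hij; subst hb; exact ⟨hadj.symm, Or.inr rfl⟩

lemma mG_update {n : ℕ} (G : SimpleGraph (Fin n)) [DecidableRel G.Adj] (i : Fin n)
    (v : Fin n → Bool) :
    (mG G (Function.update v i (!(v i))) + ∑ j ∈ G.neighborFinset i, bval (v j)) % 2
      = mG G v % 2 := by
  have key : ∀ w : Fin n → Bool,
      mG G w = (∑ e ∈ G.edgeFinset.filter (fun e => i ∈ e),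
          (if edgeAllTrue w e then 1 else 0))
        + ∑ e ∈ G.edgeFinset.filter (fun e => i ∉ e),
          (if edgeAllTrue w e then 1 else 0) := by
    intro w
    rw [mG, Finset.card_filter, ← Finset.sum_filter_add_sum_filter_not G.edgeFinset
      (fun e => i ∈ e)]
  have inc : ∀ w : Fin n → Bool,
      (∑ e ∈ G.edgeFinset.filter (fun e => i ∈ e),
          (if edgeAllTrue w e then 1 else 0))
        = ∑ j ∈ G.neighborFinset i, (if (w i && w j) = true then 1 else 0) := by
    intro w
    rw [incident_filter_eq]
    rw [Finset.sum_image (fun a _ b _ h => by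
      rwa [Sym2.congr_right] at h)]
    simp [edgeAllTrue]
  set v' := Function.update v i (!(v i)) with hv'
  have hni : ∀ j ∈ G.neighborFinset i, v' j = v j := by
    intro j hj
    rw [SimpleGraph.mem_neighborFinset] at hj
    simp [hv', Function.update_of_ne hj.ne']
  have hB : ∀ e ∈ G.edgeFinset.filter (fun e => i ∉ e),
      (if edgeAllTrue v' e then (1:ℕ) else 0) = (if edgeAllTrue v e then 1 else 0) := by
    intro e he
    rw [edgeAllTrue_update_of_not_mem v i _ e (Finset.mem_filter.mp he).2]
  rw [key v, key v', inc v, inc v', Finset.sum_congr rfl hB]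
  have hSv' : ∀ j ∈ G.neighborFinset i,
      (if (v' i && v' j) = true then (1:ℕ) else 0)
        = (if ((!(v i)) && v j) = true then 1 else 0) := by
    intro j hj
    rw [hni j hj, hv', Function.update_self]
  rw [Finset.sum_congr rfl hSv']
  have hbv : ∀ j, bval (v j) = if v j = true then 1 else 0 := by
    intro j; rfl
  simp only [hbv]
  set B := ∑ e ∈ G.edgeFinset.filter (fun e => i ∉ e),
    (if edgeAllTrue v e then (1:ℕ) else 0)
  cases hvi : v i
  · simp only [hvi, Bool.not_false, Bool.true_and, Bool.false_and, if_neg Bool.false_ne_true,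
      Finset.sum_const_zero]
    omega
  · simp only [hvi, Bool.not_true, Bool.true_and, Bool.false_and, if_neg Bool.false_ne_true,
      Finset.sum_const_zero]
    omega

/-- Each stabilizer generator `K_i = X_i ∘ ∏_{j ∈ N_G(i)} Z_j`
fixes the graph state. -/
theorem stabilizer_generator_fixes_graphState {n : ℕ} (G : SimpleGraph (Fin n))
    [DecidableRel G.Adj] (i : Fin n) :
    (Xop i ∘ₗ (G.neighborFinset i).noncommProd Zop
        (fun j _ k _ _ => Zop_commute j k)) (graphState G) = graphState G := by
  funext v
  set v' := Function.update v i (!(v i)) with hv'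
  have hXop : ∀ f : V n, Xop i f v = f v' := fun f => rfl
  simp only [LinearMap.comp_apply, hXop, Zprod_apply, graphState_apply]
  have hsum : ∑ j ∈ G.neighborFinset i, bval (v' j) = ∑ j ∈ G.neighborFinset i, bval (v j) := by
    refine Finset.sum_congr rfl fun j hj => ?_
    rw [SimpleGraph.mem_neighborFinset] at hj
    rw [hv', Function.update_of_ne hj.ne']
  have heP : ePlus n v' = ePlus n v := rfl
  rw [hsum, heP, ← mul_assoc, ← pow_add,
    neg_one_pow_congr' _ (mG G v) (by rw [Nat.add_comm]; exact mG_update G i v)]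
end
end

section
/- (Star graph states are GHZ states up to local Hadamards.) Let n ≥ 1, let c : Fin n, and let G be the star graph on Fin n with centre c, i.e. x and y are adjacent iff x ≠ y and c ∈ {x, y}. Then (∏_{i ≠ c} H_i) ψ_G = 2^{−1/2} • (δ_{v₀} + δ_{v₁}), where δ_{v₀}, δ_{v₁} ∈ V_n are the indicator basis vectors of the constant-false and constant-true assignments, respectively (the H_i for distinct i commute, so the product is well defined). -/
open scoped BigOperators

noncomputable section

/-- `2^{-1/2}` as a complex number. -/
def invSqrtTwo : ℂ := (((2 : ℝ) ^ (-(1 : ℝ) / 2) : ℝ) : ℂ)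

/-- The Hadamard operator on qubit `i`. -/
def Hop {n : ℕ} (i : Fin n) : V n →ₗ[ℂ] V n where
  toFun f := fun v => invSqrtTwo *
    (f (Function.update v i false) + (-1 : ℂ) ^ bval (v i) * f (Function.update v i true))
  map_add' f h := by funext v; simp; ring
  map_smul' c f := by funext v; simp; ring

lemma Hop_commute {n : ℕ} {i j : Fin n} (hij : i ≠ j) : Commute (Hop i) (Hop j) := by
  apply LinearMap.ext; intro f; funext v
  simp only [Module.End.mul_apply, Hop, LinearMap.coe_mk, AddHom.coe_mk,
    Function.update_of_ne hij, Function.update_of_ne hij.symm,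
    Function.update_comm hij]
  ring

/-- The indicator basis vector of an assignment `w`. -/
def deltaVec {n : ℕ} (w : Fin n → Bool) : V n := fun v => if v = w then 1 else 0

/-! ### Auxiliary lemmas -/

section Aux
variable {n : ℕ}

lemma diagOp_one : diagOp (fun _ => (1:ℂ)) = (1 : V n →ₗ[ℂ] V n) := by
  apply LinearMap.ext; intro f; funext v; simp

lemma diagOp_mul (g h : (Fin n → Bool) → ℂ) :
    diagOp g * diagOp h = diagOp (fun v => g v * h v) := by
  apply LinearMap.ext; intro f; funext v
  simp [Module.End.mul_apply, mul_assoc]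

/-- The diagonal function of a `CZ` edge operator. -/
def czg : Sym2 (Fin n) → (Fin n → Bool) → ℂ :=
  Sym2.lift ⟨fun i j v => (-1 : ℂ) ^ (bval (v i) * bval (v j)), by
    intro i j
    funext v
    show (-1 : ℂ) ^ (bval (v i) * bval (v j)) = (-1 : ℂ) ^ (bval (v j) * bval (v i))
    rw [Nat.mul_comm]⟩

lemma CZe_eq_diag (e : Sym2 (Fin n)) : CZe e = diagOp (czg e) := by
  induction e using Sym2.ind with
  | _ i j => rfl

lemma noncommProd_diag {α : Type*} [DecidableEq α] (s : Finset α)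
    (g : α → (Fin n → Bool) → ℂ) :
    ∀ comm, s.noncommProd (fun a => diagOp (g a)) comm
        = diagOp (fun v => ∏ a ∈ s, g a v) := by
  induction s using Finset.induction_on with
  | empty => intro _; simpa using diagOp_one.symm
  | @insert a s ha ih =>
      intro comm
      rw [Finset.noncommProd_insert_of_notMem _ _ _ _ ha, ih, diagOp_mul]
      congr 1
      funext v
      rw [Finset.prod_insert ha]

lemma invSqrtTwo_sq : invSqrtTwo * invSqrtTwo = (2 : ℂ)⁻¹ := by
  unfold invSqrtTwo
  rw [← Complex.ofReal_mul, ← Real.rpow_add (by norm_num)]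
  norm_num [Real.rpow_neg_one]

lemma invSqrtTwo_pow (m : ℕ) : invSqrtTwo ^ m = (((2:ℝ) ^ (-(m:ℝ)/2) : ℝ) : ℂ) := by
  unfold invSqrtTwo
  rw [← Complex.ofReal_pow, ← Real.rpow_natCast ((2:ℝ) ^ (-(1:ℝ)/2)) m,
    ← Real.rpow_mul (by norm_num)]
  norm_num
  congr 2
  ring

lemma Hop_sq (i : Fin n) : Hop i * Hop i = 1 := by
  apply LinearMap.ext; intro f; funext v
  simp only [Module.End.mul_apply, Hop, LinearMap.coe_mk, AddHom.coe_mk, Module.End.one_apply,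
    Function.update_self, Function.update_idem]
  have h2 := invSqrtTwo_sq
  cases hv : v i with
  | false =>
      have hvv : Function.update v i false = v := by rw [← hv]; exact Function.update_eq_self i v
      rw [hvv]
      simp [hv, bval]
      linear_combination (2 * f v) * h2
  | true =>
      have hvv : Function.update v i true = v := by rw [← hv]; exact Function.update_eq_self i v
      rw [hvv]
      simp [hv, bval]
      linear_combination (2 * f v) * h2

lemma prodH_invol (s : Finset (Fin n)) :
    ∀ comm, (s.noncommProd Hop comm) * (s.noncommProd Hop comm) = 1 := by
  induction s using Finset.induction_on with
  | empty => intro _; simp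
  | @insert a s ha ih =>
      intro comm
      rw [Finset.noncommProd_insert_of_notMem _ _ _ _ ha]
      have hc : Commute (s.noncommProd Hop (comm.mono (fun _ => Finset.mem_insert_of_mem)))
          (Hop a) :=
        (Finset.noncommProd_commute _ _ _ _
          (fun x hx => Hop_commute (fun h => ha (by rw [h]; exact hx)))).symm
      rw [hc.mul_mul_mul_comm, Hop_sq, ih, one_mul]

lemma prodH_delta (s : Finset (Fin n)) (w : Fin n → Bool) :
    ∀ comm (v : Fin n → Bool), (s.noncommProd Hop comm) (deltaVec w) v =
      if ∀ i, i ∉ s → v i = w i then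
        invSqrtTwo ^ s.card * (-1 : ℂ) ^ (s.filter (fun i => v i && w i)).card
      else 0 := by
  induction s using Finset.induction_on with
  | empty =>
      intro comm v
      simp [deltaVec, funext_iff]
  | @insert a s ha ih =>
      intro comm v
      rw [Finset.noncommProd_insert_of_notMem _ _ _ _ ha]
      rw [Module.End.mul_apply]
      show invSqrtTwo * (_ + (-1:ℂ) ^ bval (v a) * _) = _
      rw [ih, ih]
      have hfilt : ∀ b : Bool, (s.filter (fun i => Function.update v a b i && w i)).card
          = (s.filter (fun i => v i && w i)).card := by
        intro b
        congr 1
        apply Finset.filter_congr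
        intro i hi
        rw [Function.update_of_ne (fun h => ha (by rw [← h]; exact hi))]
      have hcond : ∀ b : Bool, (∀ i, i ∉ s → Function.update v a b i = w i) ↔
          (w a = b ∧ ∀ i, i ∉ insert a s → v i = w i) := by
        intro b
        constructor
        · intro h
          constructor
          · have h1 := h a ha
            rw [Function.update_self] at h1
            exact h1.symm
          · intro i hi
            have hia : i ≠ a := fun h' => hi (h' ▸ Finset.mem_insert_self a s)
            have := h i (fun h' => hi (Finset.mem_insert_of_mem h'))
            rwa [Function.update_of_ne hia] at this
        · rintro ⟨hw, h⟩ i hi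
          by_cases hia : i = a
          · subst hia; rw [Function.update_self, hw]
          · rw [Function.update_of_ne hia]
            exact h i (by simp [hia, hi])
      simp only [hfilt, hcond]
      rw [Finset.card_insert_of_notMem ha, Finset.filter_insert]
      by_cases hc : ∀ i, i ∉ insert a s → v i = w i
      · rw [if_pos hc]
        cases hw : w a with
        | false =>
            rw [if_pos ⟨rfl, hc⟩, if_neg (fun h => absurd h.1 (by simp))]
            simp [bval]
            ring
        | true =>
            rw [if_neg (fun h => absurd h.1 (by simp)), if_pos ⟨rfl, hc⟩]
            cases hv : v a with
            | false =>
                simp [bval]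
                ring
            | true =>
                simp [bval]
                rw [Finset.card_insert_of_notMem (fun h => ha (Finset.mem_of_mem_filter a h))]
                ring
      · rw [if_neg hc, if_neg (fun h => hc h.2), if_neg (fun h => hc h.2)]
        ring

end Aux

/-- Star graph states are GHZ states up to local Hadamards:
applying `H` to every non-centre qubit of the star graph state yields
`2^{-1/2}(|0…0⟩ + |1…1⟩)`. -/
theorem star_graphState_is_GHZ {n : ℕ} (hn : 1 ≤ n) (c : Fin n)
    (G : SimpleGraph (Fin n)) [DecidableRel G.Adj]
    (hG : ∀ x y, G.Adj x y ↔ (x ≠ y ∧ (c = x ∨ c = y))) :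
    ((Finset.univ.filter (fun i => i ≠ c)).noncommProd Hop
        (fun i hi j hj hij => Hop_commute hij)) (graphState G) =
      invSqrtTwo • (deltaVec (fun _ => false) + deltaVec (fun _ => true)) := by
  classical
  set S : Finset (Fin n) := Finset.univ.filter (fun i => i ≠ c) with hS
  have hnotS : ∀ i : Fin n, i ∉ S ↔ i = c := by
    intro i; simp [hS]
  have hScard : S.card = n - 1 := by
    rw [hS, Finset.filter_ne', Finset.card_erase_of_mem (Finset.mem_univ c),
      Finset.card_univ, Fintype.card_fin]
  -- the edge set of the star graph
  have hedge : G.edgeFinset = S.image (fun i => s(c, i)) := by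
    ext e
    induction e using Sym2.ind with
    | _ x y =>
        simp only [SimpleGraph.mem_edgeFinset, SimpleGraph.mem_edgeSet, hG,
          Finset.mem_image, hS, Finset.mem_filter, Finset.mem_univ, true_and,
          Sym2.eq_iff]
        constructor
        · rintro ⟨hxy, hc | hc⟩
          · exact ⟨y, fun h => hxy (by rw [← hc, h]), Or.inl ⟨hc, rfl⟩⟩
          · exact ⟨x, fun h => hxy (by rw [h, ← hc]), Or.inr ⟨hc, rfl⟩⟩
        · rintro ⟨i, hic, ⟨h1, h2⟩ | ⟨h1, h2⟩⟩
          · subst h1; subst h2; exact ⟨fun h => hic h.symm, Or.inl rfl⟩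
          · subst h1; subst h2; exact ⟨hic, Or.inr rfl⟩
  -- the value of the graph state
  have hgs : ∀ v : Fin n → Bool, graphState G v =
      (if v c = true then (-1:ℂ) ^ (S.filter (fun i => v i = true)).card else 1)
        * ePlus n v := by
    intro v
    unfold graphState
    erw [Finset.noncommProd_congr rfl (fun e _ => CZe_eq_diag e) (fun e _ e' _ _ => CZe_commute e e'), noncommProd_diag]
    rw [diagOp_apply]
    congr 1
    have hinj : ∀ i ∈ S, ∀ j ∈ S, s(c, i) = s(c, j) → i = j := by
      intro i hi j hj h
      rw [Sym2.eq_iff] at h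
      rcases h with ⟨-, h⟩ | ⟨h1, h2⟩
      · exact h
      · simp only [hS, Finset.mem_filter, Finset.mem_univ, true_and] at hi
        exact absurd h2 hi
    rw [hedge, Finset.prod_image hinj]
    have hterm : ∀ i : Fin n, czg s(c, i) v = (-1:ℂ) ^ (bval (v c) * bval (v i)) := by
      intro i; rfl
    cases hvc : v c with
    | false =>
        rw [if_neg Bool.false_ne_true]
        have h1 : ∀ i ∈ S, czg s(c, i) v = 1 := by
          intro i _; rw [hterm, hvc]; simp [bval]
        rw [Finset.prod_congr rfl h1, Finset.prod_const_one]
    | true =>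
        rw [if_pos rfl]
        have h1 : ∀ i ∈ S, czg s(c, i) v = (-1:ℂ) ^ (bval (v i)) := by
          intro i _; rw [hterm, hvc]; simp [bval]
        rw [Finset.prod_congr rfl h1, Finset.prod_pow_eq_pow_sum, Finset.card_filter]
        exact congrArg (fun k => ((-1:ℂ)) ^ k)
          (Finset.sum_congr rfl (fun i _ => by cases h : v i <;> simp [bval, h]))
  -- the graph state equals the Hadamard product applied to the GHZ state
  have hkey : graphState G =
      (S.noncommProd Hop (fun i hi j hj hij => Hop_commute hij))
        (invSqrtTwo • (deltaVec (fun _ => false) + deltaVec (fun _ => true))) := by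
    funext v
    rw [map_smul, LinearMap.map_add]
    simp only [Pi.smul_apply, Pi.add_apply, smul_eq_mul]
    rw [prodH_delta S (fun _ => false) (fun i hi j hj hij => Hop_commute hij) v,
      prodH_delta S (fun _ => true) (fun i hi j hj hij => Hop_commute hij) v, hgs v]
    simp only [Bool.and_false, Bool.and_true]
    have hpown : invSqrtTwo * invSqrtTwo ^ S.card = invSqrtTwo ^ n := by
      rw [← pow_succ', hScard, Nat.sub_add_cancel hn]
    have heP : ePlus n v = invSqrtTwo ^ n := by
      rw [invSqrtTwo_pow]; rfl
    cases hvc : v c with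
    | false =>
        rw [if_neg Bool.false_ne_true, one_mul]
        have h0 : ∀ i, i ∉ S → v i = false := fun i hi => by
          rw [(hnotS i).mp hi]; exact hvc
        have h1 : ¬ (∀ i, i ∉ S → v i = true) := fun h => by
          have := h c ((hnotS c).mpr rfl)
          rw [hvc] at this
          exact Bool.false_ne_true this
        rw [if_pos h0, if_neg h1]
        simp only [Bool.false_eq_true, Finset.filter_false, Finset.card_empty, pow_zero]
        rw [heP, ← hpown]
        ring
    | true =>
        rw [if_pos rfl]
        have h0 : ¬ (∀ i, i ∉ S → v i = false) := fun h => by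
          have := h c ((hnotS c).mpr rfl)
          rw [hvc] at this
          exact absurd this (by simp)
        have h1 : ∀ i, i ∉ S → v i = true := fun i hi => by
          rw [(hnotS i).mp hi]; exact hvc
        rw [if_neg h0, if_pos h1, heP, ← hpown]
        ring
  erw [hkey, ← Module.End.mul_apply, prodH_invol, Module.End.one_apply]
end
end

section
/- (Full quantum teleportation identity.) Let ψ : Bool → ℂ be any single-qubit state vector and let Ψ ∈ V_3 be defined by Ψ(v) = (1/2) · ψ(v 0) (i.e. Ψ = ψ ⊗ |+⟩ ⊗ |+⟩). For measurement outcomes m₁, m₂ : Bool define w : Bool → ℂ by w(b) = (H_0 (H_1 (CZ_{01} (CZ_{12} Ψ))))(v) where v 0 = m₁, v 1 = m₂, v 2 = b. Then w = (1/2) • (X^{[m₂]} (Z^{[m₁]} ψ)), where on single-qubit vectors (X ψ)(b) = ψ(¬b), (Z ψ)(b) = (−1)^{[b]} ψ(b), [m] ∈ {0,1} is the value of m, and X^{[m]}, Z^{[m]} mean the operator is applied iff the corresponding outcome is true. That is, teleportation transfers ψ to the third qubit up to the Pauli correction X^{m₂} Z^{m₁}. -/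
open scoped BigOperators

noncomputable section

/-- Single-qubit Pauli `X`. -/
def Xq (ψ : Bool → ℂ) : Bool → ℂ := fun b => ψ (!b)

/-- Single-qubit Pauli `Z`. -/
def Zq (ψ : Bool → ℂ) : Bool → ℂ := fun b => (-1 : ℂ) ^ bval b * ψ b

/-- `X^{[m]}`: apply `X` iff the outcome `m` is `true`. -/
def XqPow (m : Bool) (ψ : Bool → ℂ) : Bool → ℂ := if m then Xq ψ else ψ

/-- `Z^{[m]}`: apply `Z` iff the outcome `m` is `true`. -/
def ZqPow (m : Bool) (ψ : Bool → ℂ) : Bool → ℂ := if m then Zq ψ else ψ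

/-- Full quantum teleportation identity: for
`Ψ = ψ ⊗ |+⟩ ⊗ |+⟩`, projecting `H_0 (H_1 (CZ_{01} (CZ_{12} Ψ)))` on outcomes
`m₁`, `m₂` of the first two qubits leaves the third qubit in the state
`(1/2) X^{[m₂]} Z^{[m₁]} ψ`. -/
theorem full_teleportation (ψ : Bool → ℂ) (m₁ m₂ : Bool) :
    (fun b => (Hop 0 (Hop 1 (CZop 0 1 (CZop 1 2
        (fun v : Fin 3 → Bool => (1 / 2 : ℂ) * ψ (v 0)))))) ![m₁, m₂, b]) =
      (1 / 2 : ℂ) • XqPow m₂ (ZqPow m₁ ψ) := by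
  have h2 : invSqrtTwo * invSqrtTwo = 1/2 := by
    simp only [invSqrtTwo, ← Complex.ofReal_mul, ← Real.rpow_natCast, ← Real.rpow_add (by norm_num : (0:ℝ) < 2)]
    norm_num
  funext b
  cases m₁ <;> cases m₂ <;> cases b <;>
    simp [Hop, CZop, diagOp, bval, XqPow, ZqPow, Xq, Zq, Function.update,
      Fin.ext_iff, Matrix.cons_val_zero, Matrix.cons_val_one, Pi.smul_apply, smul_eq_mul] <;>
    first | linear_combination ψ true * h2 | linear_combination ψ false * h2
end
end

section
/- (Euler Z-X-Z decomposition of SU(2).) For every U in the special unitary group SU(2) of 2×2 complex matrices, there exist real numbers θ, ζ, ξ such that U = exp((ξ * i) • Z) * exp((ζ * i) • X) * exp((θ * i) • Z). -/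
noncomputable section

open Matrix

/-- The Pauli `X` matrix. -/
def Xm : Matrix (Fin 2) (Fin 2) ℂ := !![0, 1; 1, 0]

/-- The Pauli `Z` matrix. -/
def Zm : Matrix (Fin 2) (Fin 2) ℂ := !![1, 0; 0, -1]

lemma expZ (t : ℂ) : NormedSpace.exp (t • Zm) =
    !![Complex.exp t, 0; 0, Complex.exp (-t)] := by
  have h : t • Zm = Matrix.diagonal ![t, -t] := by
    ext i j
    fin_cases i <;> fin_cases j <;> simp [Zm, Matrix.diagonal]
  rw [h, Matrix.exp_diagonal]
  ext i j
  fin_cases i <;> fin_cases j <;>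
    simp [Matrix.diagonal, Pi.coe_exp, ← Complex.exp_eq_exp_ℂ]

def Hu : (Matrix (Fin 2) (Fin 2) ℂ)ˣ where
  val := !![1, 1; 1, -1]
  inv := !![1/2, 1/2; 1/2, -(1/2)]
  val_inv := by
    ext i j
    fin_cases i <;> fin_cases j <;>
      simp [Matrix.mul_apply, Fin.sum_univ_two] <;> norm_num
  inv_val := by
    ext i j
    fin_cases i <;> fin_cases j <;>
      simp [Matrix.mul_apply, Fin.sum_univ_two] <;> norm_num

lemma expX (t : ℂ) : NormedSpace.exp (t • Xm) =
    !![(Complex.exp t + Complex.exp (-t))/2, (Complex.exp t - Complex.exp (-t))/2;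
       (Complex.exp t - Complex.exp (-t))/2, (Complex.exp t + Complex.exp (-t))/2] := by
  have h : t • Xm = (Hu : Matrix (Fin 2) (Fin 2) ℂ) * (t • Zm) *
      (↑Hu⁻¹ : Matrix (Fin 2) (Fin 2) ℂ) := by
    ext i j
    fin_cases i <;> fin_cases j <;>
      simp [Hu, Xm, Zm, Matrix.mul_apply, Fin.sum_univ_two] <;> ring
  rw [h, Matrix.exp_units_conj, expZ]
  ext i j
  fin_cases i <;> fin_cases j <;>
    simp [Hu, Matrix.mul_apply, Fin.sum_univ_two] <;> ring

lemma star_exp_real_mul_I (x : ℝ) :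
    star (Complex.exp ((x : ℂ) * Complex.I)) = Complex.exp (-((x : ℂ) * Complex.I)) := by
  rw [Complex.star_def, ← Complex.exp_conj]
  congr 1
  rw [_root_.map_mul, Complex.conj_ofReal, Complex.conj_I]
  ring

lemma exp_pi_div_two_mul_I : Complex.exp ((↑(Real.pi / 2) : ℂ) * Complex.I) = Complex.I := by
  rw [Complex.exp_mul_I, ← Complex.ofReal_cos, ← Complex.ofReal_sin,
    Real.cos_pi_div_two, Real.sin_pi_div_two]
  simp

/-- Euler `Z`-`X`-`Z` decomposition of `SU(2)`: every special
unitary `2×2` matrix is `e^{iξZ} e^{iζX} e^{iθZ}` for some real `θ`, `ζ`, `ξ`. -/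
theorem su2_euler_decomposition (U : Matrix.specialUnitaryGroup (Fin 2) ℂ) :
    ∃ θ ζ ξ : ℝ, (U : Matrix (Fin 2) (Fin 2) ℂ) =
      NormedSpace.exp (((ξ : ℂ) * Complex.I) • Zm) *
        NormedSpace.exp (((ζ : ℂ) * Complex.I) • Xm) *
        NormedSpace.exp (((θ : ℂ) * Complex.I) • Zm) := by
  obtain ⟨hUu, hUdet⟩ := Matrix.mem_specialUnitaryGroup_iff.mp U.2
  set A := (U : Matrix (Fin 2) (Fin 2) ℂ) with hA
  set a := A 0 0 with ha_def
  set b := A 0 1 with hb_def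
  set c := A 1 0 with hc_def
  set d := A 1 1 with hd_def
  have hU1 : A * star A = 1 := Matrix.mem_unitaryGroup_iff.mp hUu
  have e1 : a * star a + b * star b = 1 := by
    have := congrFun (congrFun hU1 0) 0
    simpa [Matrix.mul_apply, Fin.sum_univ_two, Matrix.star_apply] using this
  have e3 : c * star a + d * star b = 0 := by
    have := congrFun (congrFun hU1 1) 0
    simpa [Matrix.mul_apply, Fin.sum_univ_two, Matrix.star_apply] using this
  have edet : a * d - b * c = 1 := by
    have h := Matrix.det_fin_two A
    rw [hUdet] at h
    rw [← ha_def, ← hb_def, ← hc_def, ← hd_def] at h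
    exact h.symm
  have hd1 : d = star a := by
    linear_combination (-d) * e1 + b * e3 + (star a) * edet
  have hc1 : c = -star b := by
    linear_combination (-c) * e1 + a * e3 + (-(star b)) * edet
  set r := ‖a‖ with hr_def
  set s := ‖b‖ with hs_def
  have hr2 : r ^ 2 + s ^ 2 = 1 := by
    have h := e1
    rw [show star a = starRingEnd ℂ a from rfl, show star b = starRingEnd ℂ b from rfl,
      Complex.mul_conj, Complex.mul_conj] at h
    have h' : Complex.normSq a + Complex.normSq b = 1 := by exact_mod_cast h
    rw [Complex.normSq_eq_norm_sq, Complex.normSq_eq_norm_sq] at h'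
    exact h'
  have hrnn : 0 ≤ r := norm_nonneg a
  have hsnn : 0 ≤ s := norm_nonneg b
  have hr1 : r ≤ 1 := by nlinarith [sq_nonneg s]
  set ζ := Real.arccos r with hζ
  have hcosζ : Real.cos ζ = r := Real.cos_arccos (by linarith) hr1
  have hsinζ : Real.sin ζ = s := by
    rw [hζ, Real.sin_arccos, show 1 - r ^ 2 = s ^ 2 by linarith, Real.sqrt_sq hsnn]
  set φ := Complex.arg a with hφ
  set ψ := Complex.arg b with hψ
  have ha : (r : ℂ) * Complex.exp ((φ : ℂ) * Complex.I) = a := Complex.norm_mul_exp_arg_mul_I a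
  have hb : (s : ℂ) * Complex.exp ((ψ : ℂ) * Complex.I) = b := Complex.norm_mul_exp_arg_mul_I b
  have ha' : (r : ℂ) * Complex.exp (-((φ : ℂ) * Complex.I)) = star a := by
    rw [show star a = (starRingEnd ℂ) a from rfl, ← ha, _root_.map_mul, Complex.conj_ofReal,
      ← Complex.exp_conj]
    congr 2
    rw [_root_.map_mul, Complex.conj_ofReal, Complex.conj_I]
    ring
  have hb' : (s : ℂ) * Complex.exp (-((ψ : ℂ) * Complex.I)) = star b := by
    rw [show star b = (starRingEnd ℂ) b from rfl, ← hb, _root_.map_mul, Complex.conj_ofReal,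
      ← Complex.exp_conj]
    congr 2
    rw [_root_.map_mul, Complex.conj_ofReal, Complex.conj_I]
    ring
  set ξ := (φ + ψ - Real.pi / 2) / 2 with hξ
  set θ := (φ - ψ + Real.pi / 2) / 2 with hθ
  refine ⟨θ, ζ, ξ, ?_⟩
  rw [expZ, expX, expZ]
  -- trig facts about ζ
  have hE : Complex.exp ((ζ : ℂ) * Complex.I) + Complex.exp (-((ζ : ℂ) * Complex.I)) =
      2 * (r : ℂ) := by
    rw [show -((ζ : ℂ) * Complex.I) = ((-ζ : ℝ) : ℂ) * Complex.I by push_cast; ring,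
      Complex.exp_mul_I, Complex.exp_mul_I, ← Complex.ofReal_cos, ← Complex.ofReal_sin,
      ← Complex.ofReal_cos, ← Complex.ofReal_sin, Real.cos_neg, Real.sin_neg, hcosζ]
    push_cast
    ring
  have hE2 : Complex.exp ((ζ : ℂ) * Complex.I) - Complex.exp (-((ζ : ℂ) * Complex.I)) =
      2 * (s : ℂ) * Complex.I := by
    rw [show -((ζ : ℂ) * Complex.I) = ((-ζ : ℝ) : ℂ) * Complex.I by push_cast; ring,
      Complex.exp_mul_I, Complex.exp_mul_I, ← Complex.ofReal_cos, ← Complex.ofReal_sin,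
      ← Complex.ofReal_cos, ← Complex.ofReal_sin, Real.cos_neg, Real.sin_neg, hsinζ]
    push_cast
    ring
  -- phase combination facts
  have hsum : Complex.exp ((ξ : ℂ) * Complex.I) * Complex.exp ((θ : ℂ) * Complex.I) =
      Complex.exp ((φ : ℂ) * Complex.I) := by
    rw [← Complex.exp_add]
    congr 1
    rw [hξ, hθ]
    push_cast
    ring
  have hsum' : Complex.exp (-((ξ : ℂ) * Complex.I)) * Complex.exp (-((θ : ℂ) * Complex.I)) =
      Complex.exp (-((φ : ℂ) * Complex.I)) := by
    rw [← Complex.exp_add]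
    congr 1
    rw [hξ, hθ]
    push_cast
    ring
  have hdiff : Complex.I * (Complex.exp ((ξ : ℂ) * Complex.I) *
      Complex.exp (-((θ : ℂ) * Complex.I))) = Complex.exp ((ψ : ℂ) * Complex.I) := by
    have h1 : Complex.exp ((↑(Real.pi / 2) : ℂ) * Complex.I) *
        (Complex.exp ((ξ : ℂ) * Complex.I) * Complex.exp (-((θ : ℂ) * Complex.I))) =
        Complex.exp ((ψ : ℂ) * Complex.I) := by
      rw [← Complex.exp_add, ← Complex.exp_add]
      congr 1
      rw [hξ, hθ]
      push_cast
      ring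
    rw [← h1, exp_pi_div_two_mul_I]
  have hdiff' : Complex.exp (-((ξ : ℂ) * Complex.I)) * Complex.exp ((θ : ℂ) * Complex.I) =
      Complex.I * Complex.exp (-((ψ : ℂ) * Complex.I)) := by
    have h1 : Complex.exp (-((ξ : ℂ) * Complex.I)) * Complex.exp ((θ : ℂ) * Complex.I) =
        Complex.exp ((↑(Real.pi / 2) : ℂ) * Complex.I) *
          Complex.exp (-((ψ : ℂ) * Complex.I)) := by
      rw [← Complex.exp_add, ← Complex.exp_add]
      congr 1
      rw [hξ, hθ]
      push_cast
      ring
    rw [h1, exp_pi_div_two_mul_I]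
  rw [Matrix.eta_fin_two A, Matrix.mul_fin_two, Matrix.mul_fin_two]
  rw [← ha_def, ← hb_def, ← hc_def, ← hd_def]
  ext i j
  fin_cases i <;> fin_cases j <;>
    simp only [Fin.zero_eta, Fin.mk_one, Fin.isValue, Matrix.cons_val', Matrix.cons_val_zero,
      Matrix.cons_val_one, Matrix.head_cons, Matrix.empty_val', Matrix.cons_val_fin_one,
      Matrix.head_fin_const, Matrix.of_apply]
  · linear_combination (-1 : ℂ) * ha + (-(r : ℂ)) * hsum +
      (-(Complex.exp ((ξ : ℂ) * Complex.I) * Complex.exp ((θ : ℂ) * Complex.I)) / 2) * hE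
  · linear_combination (-1 : ℂ) * hb + (-(s : ℂ)) * hdiff +
      (-(Complex.exp ((ξ : ℂ) * Complex.I) * Complex.exp (-((θ : ℂ) * Complex.I))) / 2) * hE2
  · linear_combination hc1 + hb' +
      (-(Complex.exp ((ζ : ℂ) * Complex.I) - Complex.exp (-((ζ : ℂ) * Complex.I))) / 2) * hdiff' +
      (-(Complex.I * Complex.exp (-((ψ : ℂ) * Complex.I))) / 2) * hE2 +
      (-(s : ℂ) * Complex.exp (-((ψ : ℂ) * Complex.I))) * Complex.I_sq
  · linear_combination hd1 + (-1 : ℂ) * ha' + (-(r : ℂ)) * hsum' +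
      (-(Complex.exp (-((ξ : ℂ) * Complex.I)) * Complex.exp (-((θ : ℂ) * Complex.I))) / 2) * hE
end
end
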